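/- arXiv:0910.4106 — 5 statements merged into one kernel-verified Lean document; each statement's English description precedes it below -/
import Mathlib

section
/- Let X be a linearly ordered set with a topology having a base of order-convex sets (a GO-space), let E be a closed discrete subset of X, and let S ⊆ X. Suppose for each x ∈ S there is e(x) ∈ E with x < e(x) such that the closed intervals [x, e(x)] for x ∈ S are pairwise disjoint. Then any convex open set meeting at most one point of E meets at most three of the intervals [x, e(x)]. -/
open Set TopologicalSpace

def PointFinite {X : Type*} (C : Set (Set X)) : Prop :=
  ∀ x : X, {U ∈ C | x ∈ U}.Finite

def Refines {X : Type*} (A B : Set (Set X)) : Prop :=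
  ∀ U ∈ A, ∃ V ∈ B, U ⊆ V

def IsOpenCover {X : Type*} [TopologicalSpace X] (C : Set (Set X)) : Prop :=
  (∀ U ∈ C, IsOpen U) ∧ ⋃₀ C = Set.univ

def MonotonicallyMetacompact (X : Type*) [TopologicalSpace X] : Prop :=
  ∃ r : Set (Set X) → Set (Set X),
    (∀ U, _root_.IsOpenCover U →
      _root_.IsOpenCover (r U) ∧ PointFinite (r U) ∧ Refines (r U) U) ∧
    (∀ U V, _root_.IsOpenCover U → _root_.IsOpenCover V → Refines U V → Refines (r U) (r V))

def MonotonicallyCountablyMetacompact (X : Type*) [TopologicalSpace X] : Prop :=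
  ∃ r : Set (Set X) → Set (Set X),
    (∀ U, _root_.IsOpenCover U → U.Countable →
      _root_.IsOpenCover (r U) ∧ PointFinite (r U) ∧ Refines (r U) U) ∧
    (∀ U V, _root_.IsOpenCover U → _root_.IsOpenCover V → U.Countable → V.Countable →
      Refines U V → Refines (r U) (r V))

def IsPerfectSpace (X : Type*) [TopologicalSpace X] : Prop :=
  ∀ C : Set X, IsClosed C → ∃ f : ℕ → Set X, (∀ n, IsOpen (f n)) ∧ C = ⋂ n, f n

def St {X : Type*} (x : X) (C : Set (Set X)) : Set X := ⋃₀ {G ∈ C | x ∈ G}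

def IsDevelopment {X : Type*} [TopologicalSpace X] (G : ℕ → Set (Set X)) : Prop :=
  (∀ n, _root_.IsOpenCover (G n)) ∧
  ∀ x : X, ∀ U : Set X, IsOpen U → x ∈ U → ∃ n, St x (G n) ⊆ U

def IsMooreSpace (X : Type*) [TopologicalSpace X] : Prop :=
  RegularSpace X ∧ T1Space X ∧ ∃ G : ℕ → Set (Set X), IsDevelopment G

def Metacompact (X : Type*) [TopologicalSpace X] : Prop :=
  ∀ U : Set (Set X), _root_.IsOpenCover U →
    ∃ V, _root_.IsOpenCover V ∧ PointFinite V ∧ Refines V U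

/-!
Every interval `[x, e x]` meeting `U` other than the leftmost and the rightmost one lies strictly
between two intervals meeting `U`, so by convexity its right endpoint `e x` lies in `U ∩ E`.
Disjoint intervals have distinct right endpoints, hence there is at most one such interval.
-/

section LinearOrder

variable {α : Type*} [LinearOrder α]

theorem Set.encard_le_encard_sep_between_add_two (T : Set α) :
    T.encard ≤ {y ∈ T | (∃ x ∈ T, x < y) ∧ ∃ z ∈ T, y < z}.encard + 2 := by
  set M := {y ∈ T | (∃ x ∈ T, x < y) ∧ ∃ z ∈ T, y < z}
  have hcover : T ⊆ M ∪ (T ∩ lowerBounds T) ∪ (T ∩ upperBounds T) := by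
    intro y hy
    by_cases hlo : ∃ x ∈ T, x < y
    · by_cases hhi : ∃ z ∈ T, y < z
      · exact .inl (.inl ⟨hy, hlo, hhi⟩)
      · push Not at hhi
        exact .inr ⟨hy, hhi⟩
    · push Not at hlo
      exact .inl (.inr ⟨hy, hlo⟩)
  have hleast : (T ∩ lowerBounds T).encard ≤ 1 :=
    encard_le_one_iff_subsingleton.2 fun a ha b hb => (ha.2 hb.1).antisymm (hb.2 ha.1)
  have hgreatest : (T ∩ upperBounds T).encard ≤ 1 :=
    encard_le_one_iff_subsingleton.2 fun a ha b hb => (hb.2 ha.1).antisymm (ha.2 hb.1)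
  calc T.encard ≤ (M ∪ (T ∩ lowerBounds T)).encard + (T ∩ upperBounds T).encard :=
        (encard_le_encard hcover).trans (encard_union_le _ _)
    _ ≤ M.encard + (T ∩ lowerBounds T).encard + (T ∩ upperBounds T).encard := by
        gcongr; exact encard_union_le _ _
    _ ≤ M.encard + 1 + 1 := by gcongr
    _ = M.encard + 2 := by rw [add_assoc, one_add_one_eq_two]

theorem lt_of_disjoint_Icc {a b c d : α} (h : Disjoint (Icc a b) (Icc c d)) (hac : a ≤ c)
    (hcd : c ≤ d) : b < c := by
  by_contra! hcb
  exact h.ne_of_mem ⟨hac, hcb⟩ (left_mem_Icc.2 hcd) rfl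

variable {S : Set α} {e : α → α}

theorem injOn_of_pairwise_disjoint_Icc (hle : ∀ x ∈ S, x ≤ e x)
    (hdisj : S.Pairwise fun x y => Disjoint (Icc x (e x)) (Icc y (e y))) : S.InjOn e := by
  intro x hx y hy hxy
  by_contra hne
  have hey : e x ∈ Icc y (e y) := by rw [hxy]; exact right_mem_Icc.2 (hle y hy)
  exact (hdisj hx hy hne).ne_of_mem (right_mem_Icc.2 (hle x hx)) hey rfl

theorem right_mem_of_between_Icc_inter_nonempty {U : Set α} (hU : U.OrdConnected)
    (hle : ∀ x ∈ S, x ≤ e x)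
    (hdisj : S.Pairwise fun x y => Disjoint (Icc x (e x)) (Icc y (e y)))
    {x y z : α} (hx : x ∈ S) (hy : y ∈ S) (hz : z ∈ S) (hxy : x < y) (hyz : y < z)
    (hUx : (U ∩ Icc x (e x)).Nonempty) (hUz : (U ∩ Icc z (e z)).Nonempty) : e y ∈ U := by
  obtain ⟨u, huU, hux⟩ := hUx
  obtain ⟨w, hwU, hwz⟩ := hUz
  have hexy : e x < y := lt_of_disjoint_Icc (hdisj hx hy hxy.ne) hxy.le (hle y hy)
  have heyz : e y < z := lt_of_disjoint_Icc (hdisj hy hz hyz.ne) hyz.le (hle z hz)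
  exact hU.out huU hwU ⟨hux.2.trans (hexy.le.trans (hle y hy)), heyz.le.trans hwz.1⟩

end LinearOrder

theorem stmt2_general {X : Type*} [LinearOrder X]
    (E : Set X)
    (S : Set X) (e : X → X) (he : ∀ x ∈ S, e x ∈ E ∧ x < e x)
    (hdisj : S.Pairwise fun x y => Disjoint (Set.Icc x (e x)) (Set.Icc y (e y)))
    (U : Set X) (hUconv : U.OrdConnected)
    (hUE : (U ∩ E).Subsingleton) :
    {x ∈ S | (U ∩ Set.Icc x (e x)).Nonempty}.encard ≤ 3 := by
  set T := {x ∈ S | (U ∩ Set.Icc x (e x)).Nonempty}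
  have hle : ∀ x ∈ S, x ≤ e x := fun x hx => (he x hx).2.le
  have hbetween : {y ∈ T | (∃ x ∈ T, x < y) ∧ ∃ z ∈ T, y < z}.Subsingleton := by
    have hmem : ∀ y ∈ {y ∈ T | (∃ x ∈ T, x < y) ∧ ∃ z ∈ T, y < z}, e y ∈ U ∩ E := by
      rintro y ⟨hyT, ⟨x, hxT, hxy⟩, z, hzT, hyz⟩
      exact ⟨right_mem_of_between_Icc_inter_nonempty hUconv hle hdisj hxT.1 hyT.1 hzT.1 hxy hyz
        hxT.2 hzT.2, (he y hyT.1).1⟩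
    intro a ha b hb
    exact injOn_of_pairwise_disjoint_Icc hle hdisj ha.1.1 hb.1.1 (hUE (hmem a ha) (hmem b hb))
  calc T.encard ≤ _ + 2 := T.encard_le_encard_sep_between_add_two
    _ ≤ 1 + 2 := by gcongr; exact encard_le_one_iff_subsingleton.2 hbetween
    _ = 3 := by norm_num

theorem stmt2 {X : Type*} [LinearOrder X] [TopologicalSpace X] [T2Space X]
    (B : Set (Set X)) (hB : IsTopologicalBasis B) (hBconv : ∀ b ∈ B, b.OrdConnected)
    (E : Set X) (hEc : IsClosed E) (hEd : DiscreteTopology ↥E)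
    (S : Set X) (e : X → X) (he : ∀ x ∈ S, e x ∈ E ∧ x < e x)
    (hdisj : S.Pairwise fun x y => Disjoint (Set.Icc x (e x)) (Set.Icc y (e y)))
    (U : Set X) (hU : IsOpen U) (hUconv : U.OrdConnected)
    (hUE : (U ∩ E).Subsingleton) :
    {x ∈ S | (U ∩ Set.Icc x (e x)).Nonempty}.encard ≤ 3 :=
  stmt2_general E S e he hdisj U hUconv hUE
end

section
/- Let X be a GO-space, E a closed discrete subset, S ⊆ X, and e : S → E with x < e(x) for all x ∈ S such that the intervals [x, e(x)], x ∈ S, are pairwise disjoint. Then S is a closed discrete subset of X. -/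
open Set TopologicalSpace

/-! Take an order-convex basic neighbourhood `b` of `z` meeting `E` in at most `z`. For `x < y`
in `b ∩ S`, disjointness of `[x, e x]` and `[y, e y]` forces `e x < y`, so `e x ∈ b ∩ E`, i.e.
`e x = z`. Three points `x < y < w` of `b ∩ S` would give `e x = e y = z` although
`e x < y < e y`; hence `b ∩ S` is finite, and `b` minus its finitely many points of `S` other
than `z` is a neighbourhood of `z` meeting `S` at most in `z`. -/

open Filter Topology

theorem isClosed_and_discreteTopology_iff {X : Type*} [TopologicalSpace X] {S : Set X} :
    IsClosed S ∧ DiscreteTopology S ↔ ∀ x, Sᶜ ∈ 𝓝[≠] x := by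
  simp_rw [← isDiscrete_iff_discreteTopology, isClosed_and_discrete_iff, disjoint_principal_right]

section DisjointIntervals

variable {X : Type*} [LinearOrder X] {S E : Set X} {e : X → X}

theorem map_lt_of_pairwise_disjoint_Icc
    (hdisj : S.Pairwise fun x y => Disjoint (Icc x (e x)) (Icc y (e y)))
    {x y : X} (hx : x ∈ S) (hy : y ∈ S) (hye : y ≤ e y) (hxy : x < y) : e x < y := by
  by_contra! hyx
  exact (hdisj hx hy hxy.ne).ne_of_mem ⟨hxy.le, hyx⟩ ⟨le_rfl, hye⟩ rfl

variable (he : ∀ x ∈ S, e x ∈ E ∧ x < e x)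
  (hdisj : S.Pairwise fun x y => Disjoint (Icc x (e x)) (Icc y (e y)))
include he hdisj

theorem map_eq_of_ordConnected {b : Set X} (hb : b.OrdConnected) {z : X} (hbE : b ∩ E ⊆ {z})
    {x y : X} (hx : x ∈ b ∩ S) (hy : y ∈ b ∩ S) (hxy : x < y) : e x = z :=
  have hex : e x < y := map_lt_of_pairwise_disjoint_Icc hdisj hx.2 hy.2 (he y hy.2).2.le hxy
  hbE ⟨hb.out hx.1 hy.1 ⟨(he x hx.2).2.le, hex.le⟩, (he x hx.2).1⟩

theorem finite_inter_of_ordConnected {b : Set X} (hb : b.OrdConnected) {z : X}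
    (hbE : b ∩ E ⊆ {z}) : (b ∩ S).Finite := by
  refine finite_of_forall_not_lt_lt fun x hx y hy w hw hxy hyw => ?_
  have hex : e x < y := map_lt_of_pairwise_disjoint_Icc hdisj hx.2 hy.2 (he y hy.2).2.le hxy
  have hexy : e x = e y := (map_eq_of_ordConnected he hdisj hb hbE hx hy hxy).trans
    (map_eq_of_ordConnected he hdisj hb hbE hy hw hyw).symm
  exact (hex.trans (he y hy.2).2).ne hexy

end DisjointIntervals

theorem stmt3 {X : Type*} [LinearOrder X] [TopologicalSpace X] [T2Space X]
    (B : Set (Set X)) (hB : IsTopologicalBasis B) (hBconv : ∀ b ∈ B, b.OrdConnected)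
    (E : Set X) (hEc : IsClosed E) (hEd : DiscreteTopology ↥E)
    (S : Set X) (e : X → X) (he : ∀ x ∈ S, e x ∈ E ∧ x < e x)
    (hdisj : S.Pairwise fun x y => Disjoint (Set.Icc x (e x)) (Set.Icc y (e y))) :
    IsClosed S ∧ DiscreteTopology ↥S := by
  refine isClosed_and_discreteTopology_iff.2 fun z => ?_
  have hE : Eᶜ ∈ 𝓝[≠] z := isClosed_and_discreteTopology_iff.1 ⟨hEc, hEd⟩ z
  obtain ⟨W, hWz, hWE⟩ := mem_nhdsWithin.1 hE
  obtain ⟨b, hbB, hzb, hbW⟩ := hB.mem_nhds_iff.1 (hWz.mem_nhds hWE.1)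
  have hbE : b ∩ E ⊆ {z} := fun x ⟨hxb, hxE⟩ => by_contra fun hxz => hWE.2 ⟨hbW hxb, hxz⟩ hxE
  have hfin : (b ∩ S).Finite := finite_inter_of_ordConnected he hdisj (hBconv b hbB) hbE
  have hb : b ∈ 𝓝[≠] z := mem_nhdsWithin_of_mem_nhds (hB.mem_nhds hbB hzb)
  filter_upwards [hb, nhdsNE_le_cofinite z hfin.compl_mem_cofinite] with x hxb hxS hxS'
  exact hxS ⟨hxb, hxS'⟩
end

section
/- Every metrizable space is monotonically metacompact: there is an operator r assigning to each open cover U a point-finite open refinement r(U) covering the space, such that if every member of U is contained in some member of V, then every member of r(U) is contained in some member of r(V). -/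
open Set TopologicalSpace

/-!
Fix a sequence of point-finite open covers `G 0, G 1, …`, each refining the previous one, whose
members shrink around every point (a development; in a metric space take covers by sets in
balls of radius `2⁻ⁿ`, which exist by paracompactness). Given an open cover `U`, let `r U`
consist of those members of the `G n` that lie in a member of `U` while none of their supersets
at earlier levels does. A set lying in a member of `U` lies in a member of `r U` (its coarsest
such superset); this gives the covering property, and monotonicity, since a set lying in a member
of `U` also lies in a member of any `V` refined by `U`. Point-finiteness: from some level `N` on,
every member of the `G n` containing `x` lies in a member of `U`, so the members of `r U`
containing `x` come from the finitely many point-finite levels `G 0, …, G N`.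
-/

open Filter Topology

section

variable {X : Type*}

theorem Refines.refl (A : Set (Set X)) : Refines A A :=
  fun U hU => ⟨U, hU, subset_rfl⟩

theorem Refines.trans {A B C : Set (Set X)} (hAB : Refines A B) (hBC : Refines B C) :
    Refines A C := by
  intro U hU
  obtain ⟨V, hV, hUV⟩ := hAB U hU
  obtain ⟨W, hW, hVW⟩ := hBC V hV
  exact ⟨W, hW, hUV.trans hVW⟩

theorem refines_of_le {G : ℕ → Set (Set X)} (hG : ∀ n, Refines (G (n + 1)) (G n)) {m n : ℕ}
    (hmn : m ≤ n) : Refines (G n) (G m) := by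
  induction n, hmn using Nat.le_induction with
  | base => exact .refl _
  | succ n _ ih => exact (hG n).trans ih

def Fits (U : Set (Set X)) (A : Set X) : Prop :=
  ∃ V ∈ U, A ⊆ V

theorem Fits.of_refines {U V : Set (Set X)} {A : Set X} (hA : Fits U A) (hUV : Refines U V) :
    Fits V A := by
  obtain ⟨W, hW, hAW⟩ := hA
  obtain ⟨W', hW', hWW'⟩ := hUV W hW
  exact ⟨W', hW', hAW.trans hWW'⟩

section CoarsestFitting

variable {G : ℕ → Set (Set X)}

def coarsestFitting (G : ℕ → Set (Set X)) (U : Set (Set X)) : Set (Set X) :=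
  {A | ∃ n, A ∈ G n ∧ Fits U A ∧ ∀ m < n, ∀ B ∈ G m, A ⊆ B → ¬ Fits U B}

theorem exists_mem_coarsestFitting_superset {U : Set (Set X)} {A : Set X} {n : ℕ}
    (hA : A ∈ G n) (hfit : Fits U A) : ∃ B ∈ coarsestFitting G U, A ⊆ B := by
  classical
  have hex : ∃ m, ∃ B ∈ G m, A ⊆ B ∧ Fits U B := ⟨n, A, hA, subset_rfl, hfit⟩
  obtain ⟨B, hB, hAB, hBfit⟩ := Nat.find_spec hex
  refine ⟨B, ⟨Nat.find hex, hB, hBfit, fun m hm C hC hBC hCfit => ?_⟩, hAB⟩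
  exact Nat.find_min hex hm ⟨C, hC, hAB.trans hBC, hCfit⟩

theorem refines_coarsestFitting (U : Set (Set X)) : Refines (coarsestFitting G U) U :=
  fun _ ⟨_, _, hfit, _⟩ => hfit

theorem coarsestFitting_refines_of_refines {U V : Set (Set X)} (hUV : Refines U V) :
    Refines (coarsestFitting G U) (coarsestFitting G V) :=
  fun _ ⟨_, hA, hfit, _⟩ => exists_mem_coarsestFitting_superset hA (hfit.of_refines hUV)

variable [TopologicalSpace X]

theorem IsDevelopment.exists_forall_fits (hdev : IsDevelopment G) {U : Set (Set X)}
    (hU : _root_.IsOpenCover U) (x : X) : ∃ N, ∀ B ∈ G N, x ∈ B → Fits U B := by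
  obtain ⟨V, hV, hxV⟩ := (hU.2.symm ▸ mem_univ x : x ∈ ⋃₀ U)
  obtain ⟨N, hN⟩ := hdev.2 x V (hU.1 V hV) hxV
  refine ⟨N, fun B hB hxB => ⟨V, hV, ?_⟩⟩
  exact (subset_sUnion_of_mem (show B ∈ {B ∈ G N | x ∈ B} from ⟨hB, hxB⟩)).trans hN

theorem isOpenCover_coarsestFitting (hdev : IsDevelopment G) {U : Set (Set X)}
    (hU : _root_.IsOpenCover U) : _root_.IsOpenCover (coarsestFitting G U) := by
  refine ⟨fun A ⟨n, hA, _⟩ => (hdev.1 n).1 A hA, eq_univ_of_forall fun x => ?_⟩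
  obtain ⟨N, hN⟩ := hdev.exists_forall_fits hU x
  obtain ⟨A, hA, hxA⟩ := ((hdev.1 N).2.symm ▸ mem_univ x : x ∈ ⋃₀ G N)
  obtain ⟨B, hB, hAB⟩ := exists_mem_coarsestFitting_superset hA (hN A hA hxA)
  exact ⟨B, hB, hAB hxA⟩

theorem pointFinite_coarsestFitting (hdev : IsDevelopment G) (hpf : ∀ n, PointFinite (G n))
    (hG : ∀ n, Refines (G (n + 1)) (G n)) {U : Set (Set X)} (hU : _root_.IsOpenCover U) :
    PointFinite (coarsestFitting G U) := by
  intro x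
  obtain ⟨N, hN⟩ := hdev.exists_forall_fits hU x
  have hsub : {A ∈ coarsestFitting G U | x ∈ A} ⊆ ⋃ n ∈ Iic N, {A ∈ G n | x ∈ A} := by
    rintro A ⟨⟨n, hA, -, hcoarsest⟩, hxA⟩
    have hnN : n ≤ N := by
      by_contra! hNn
      obtain ⟨B, hB, hAB⟩ := refines_of_le hG hNn.le A hA
      exact hcoarsest N hNn B hB hAB (hN B hB (hAB hxA))
    exact mem_biUnion hnN ⟨hA, hxA⟩
  exact ((finite_Iic N).biUnion fun n _ => hpf n x).subset hsub

theorem monotonicallyMetacompact_of_isDevelopment (hdev : IsDevelopment G)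
    (hpf : ∀ n, PointFinite (G n)) (hG : ∀ n, Refines (G (n + 1)) (G n)) :
    MonotonicallyMetacompact X :=
  ⟨coarsestFitting G,
    fun _ hU => ⟨isOpenCover_coarsestFitting hdev hU, pointFinite_coarsestFitting hdev hpf hG hU,
      refines_coarsestFitting _⟩,
    fun _ _ _ _ hUV => coarsestFitting_refines_of_refines hUV⟩

end CoarsestFitting

theorem IsOpenCover.exists_pointFinite_refinement [TopologicalSpace X] [ParacompactSpace X]
    {W : Set (Set X)} (hW : _root_.IsOpenCover W) :
    ∃ C, _root_.IsOpenCover C ∧ PointFinite C ∧ Refines C W := by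
  obtain ⟨v, hvo, hvc, hvlf, hvW⟩ :=
    precise_refinement (fun U : W => (U : Set X)) (fun U => hW.1 U U.2)
      (sUnion_eq_iUnion.symm.trans hW.2)
  refine ⟨range v, ⟨forall_mem_range.2 hvo, by rwa [sUnion_range]⟩, fun x => ?_,
    forall_mem_range.2 fun U => ⟨U, U.2, hvW U⟩⟩
  refine ((hvlf.point_finite x).image v).subset ?_
  rintro _ ⟨⟨U, rfl⟩, hx⟩
  exact ⟨U, hx, rfl⟩

section Metric

variable [PseudoMetricSpace X]

theorem IsOpenCover.exists_pointFinite_refinement_subset_ball {W : Set (Set X)}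
    (hW : _root_.IsOpenCover W) {δ : ℝ} (hδ : 0 < δ) :
    ∃ C, _root_.IsOpenCover C ∧ PointFinite C ∧ Refines C W ∧
      ∀ A ∈ C, ∃ c, A ⊆ Metric.ball c δ := by
  set W' := image2 (fun c B => Metric.ball c δ ∩ B) univ W
  have hW' : _root_.IsOpenCover W' := by
    refine ⟨forall_mem_image2.2 fun c _ B hB => Metric.isOpen_ball.inter (hW.1 B hB),
      eq_univ_of_forall fun x => ?_⟩
    obtain ⟨B, hB, hxB⟩ := (hW.2.symm ▸ mem_univ x : x ∈ ⋃₀ W)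
    exact ⟨_, mem_image2_of_mem (mem_univ x) hB, Metric.mem_ball_self hδ, hxB⟩
  obtain ⟨C, hC, hpf, hCW'⟩ := hW'.exists_pointFinite_refinement
  refine ⟨C, hC, hpf, fun A hA => ?_, fun A hA => ?_⟩ <;>
    obtain ⟨_, ⟨c, -, B, hB, rfl⟩, hAB⟩ := hCW' A hA
  · exact ⟨B, hB, hAB.trans inter_subset_right⟩
  · exact ⟨c, hAB.trans inter_subset_left⟩

theorem isDevelopment_of_forall_subset_ball {G : ℕ → Set (Set X)}
    (hG : ∀ n, _root_.IsOpenCover (G n)) {r : ℕ → ℝ} (hr : Tendsto r atTop (𝓝 0))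
    (hball : ∀ n, ∀ A ∈ G n, ∃ c, A ⊆ Metric.ball c (r n)) :
    IsDevelopment G := by
  refine ⟨hG, fun x O hO hxO => ?_⟩
  obtain ⟨ε, hε, hεO⟩ := Metric.isOpen_iff.1 hO x hxO
  obtain ⟨n, hn⟩ := (hr.eventually (gt_mem_nhds (half_pos hε))).exists
  refine ⟨n, sUnion_subset fun A ⟨hA, hxA⟩ => ?_⟩
  obtain ⟨c, hAc⟩ := hball n A hA
  refine hAc.trans ((Metric.ball_subset_ball' ?_).trans hεO)
  linarith [Metric.mem_ball'.1 (hAc hxA)]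

theorem exists_isDevelopment_pointFinite_refines :
    ∃ G : ℕ → Set (Set X), IsDevelopment G ∧ (∀ n, PointFinite (G n)) ∧
      ∀ n, Refines (G (n + 1)) (G n) := by
  have hstep (n : ℕ) (C : {C : Set (Set X) // _root_.IsOpenCover C}) :
      ∃ C' : {C' : Set (Set X) // _root_.IsOpenCover C'},
        PointFinite C'.1 ∧ Refines C'.1 C.1 ∧
        ∀ A ∈ C'.1, ∃ c, A ⊆ Metric.ball c ((1 / 2 : ℝ) ^ n) := by
    obtain ⟨C', hC', h⟩ := C.2.exists_pointFinite_refinement_subset_ball (δ := (1 / 2) ^ n)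
      (by positivity)
    exact ⟨⟨C', hC'⟩, h⟩
  choose F hF using hstep
  let seq : ℕ → {C : Set (Set X) // _root_.IsOpenCover C} := fun n =>
    Nat.rec ⟨{univ}, by simp [_root_.IsOpenCover]⟩ (fun n C => F n C) n
  refine ⟨fun n => (seq (n + 1)).1, ?_, fun n => (hF n (seq n)).1,
    fun n => (hF (n + 1) (seq (n + 1))).2.1⟩
  exact isDevelopment_of_forall_subset_ball (fun n => (seq (n + 1)).2)
    (tendsto_pow_atTop_nhds_zero_of_lt_one (by norm_num) (by norm_num))
    fun n => (hF n (seq n)).2.2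

end Metric

end

theorem stmt4 {X : Type*} [TopologicalSpace X] [MetrizableSpace X] :
    MonotonicallyMetacompact X := by
  let := pseudoMetrizableSpacePseudoMetric X
  obtain ⟨G, hdev, hpf, hG⟩ := exists_isDevelopment_pointFinite_refines (X := X)
  exact monotonicallyMetacompact_of_isDevelopment hdev hpf hG
end

section
/- The ordinal space [0, ω₁) with the order topology is not monotonically countably metacompact. -/
open Set TopologicalSpace

/-!
Suppose `r` witnesses monotone countable metacompactness. For each `γ`, the refinement by `r` of
the cover `{Iic γ, Ioi γ}` has a member `W γ ∋ γ`; being open, it contains an interval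
`Ioc (g γ) γ` when `γ > 0`. The map `g` is regressive, and a pressing-down argument gives an
unbounded fiber: `γ₀ < γ₁ < ⋯` with `g γₙ = β`. With `δ = sup γₙ`, every `{Iic γₙ, Ioi γₙ}` is
a subfamily of the countable cover `E = {Iic α | α < δ} ∪ {Ioi α | β < α < δ}`, so by
monotonicity each `W γₙ` lies in a member `Yₙ` of `r E`. All the `Yₙ` contain `succ β`, so
point-finiteness makes one member of `r E` contain cofinally many `γₙ` as well as `succ β`, and
no member of `E` does.
-/

section WellOrder

variable {X : Type*} [LinearOrder X]

theorem BddAbove.exists_isLUB_of_wellFoundedLT [WellFoundedLT X] {S : Set X} (hS : BddAbove S) :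
    ∃ m, IsLUB S m :=
  let ⟨m, hm, hmin⟩ := wellFounded_lt.has_min _ hS
  ⟨m, hm, fun _ hb => not_lt.1 (hmin _ hb)⟩

theorem exists_strictMono_gt_mem_of_not_bddAbove {S : Set X} (hS : ¬BddAbove S) (a : X) :
    ∃ f : ℕ → X, StrictMono f ∧ ∀ n, a < f n ∧ f n ∈ S := by
  choose next hnext_mem hlt_next using not_bddAbove_iff.1 hS
  have hf_succ : ∀ n, next^[n + 1] a = next (next^[n] a) :=
    (Function.iterate_succ_apply' next · a)
  have hf_mono : StrictMono fun n => next^[n] a :=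
    strictMono_nat_of_lt_succ fun n => hf_succ n ▸ hlt_next _
  refine ⟨fun n => next^[n + 1] a, strictMono_nat_of_lt_succ fun n => hf_mono (Nat.lt_succ_self _),
    fun n => ⟨hf_mono n.succ_pos, ?_⟩⟩
  show next^[n + 1] a ∈ S
  exact (hf_succ n).symm ▸ hnext_mem _

/- If every fiber were bounded, choose `xₙ₊₁` above `xₙ` and above the bounds of all fibers over
`Iic xₙ`. The supremum `m` of the `xₙ` has `g m < xₙ` for some `n`, whence `m ≤ xₙ₊₁ < m`. -/
theorem exists_not_bddAbove_preimage_of_lt_self [WellFoundedLT X] [NoMaxOrder X]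
    (hIio : ∀ x : X, (Iio x).Countable) (hbdd : ∀ S : Set X, S.Countable → BddAbove S)
    {g : X → X} (hg : ∀ γ, ¬IsMin γ → g γ < γ) : ∃ β, ¬BddAbove (g ⁻¹' {β}) := by
  by_contra! hfiber
  choose F hF using hfiber
  have hstep : ∀ x, ∃ y, x < y ∧ ∀ β ≤ x, F β < y := by
    intro x
    have hS : (insert x (F '' Iic x)).Countable := by
      rw [← Iio_insert]
      exact (((hIio x).insert x).image F).insert x
    obtain ⟨b, hb⟩ := hbdd _ hS
    obtain ⟨y, hby⟩ := exists_gt b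
    exact ⟨y, (hb (mem_insert x _)).trans_lt hby,
      fun β hβ => (hb (mem_insert_of_mem _ ⟨β, hβ, rfl⟩)).trans_lt hby⟩
  choose next hlt_next hF_lt_next using hstep
  obtain ⟨x₀, -⟩ := hbdd ∅ countable_empty
  set h : ℕ → X := fun n => next^[n] x₀
  have h_succ : ∀ n, h (n + 1) = next (h n) := (Function.iterate_succ_apply' next · x₀)
  have h_mono : StrictMono h := strictMono_nat_of_lt_succ fun n => h_succ n ▸ hlt_next _
  obtain ⟨m, hm⟩ := (hbdd _ (countable_range h)).exists_isLUB_of_wellFoundedLT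
  have hm_not_min : ¬IsMin m :=
    not_isMin_iff.2 ⟨h 0, (h_mono zero_lt_one).trans_le (hm.1 (mem_range_self 1))⟩
  obtain ⟨_, ⟨n, rfl⟩, hn⟩ := (lt_isLUB_iff hm).1 (hg m hm_not_min)
  have hm_le : m ≤ F (g m) := hF (g m) rfl
  exact (hm_le.trans_lt (h_succ n ▸ hF_lt_next _ _ hn.le)).not_ge (hm.1 (mem_range_self _))

end WellOrder

section Covers

variable {X : Type*}

theorem Refines.of_subset {A B : Set (Set X)} (h : A ⊆ B) : Refines A B :=
  fun U hU => ⟨U, h hU, subset_rfl⟩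

theorem IsOpenCover.mono [TopologicalSpace X] {C D : Set (Set X)} (hC : _root_.IsOpenCover C)
    (hCD : C ⊆ D) (hD : ∀ U ∈ D, IsOpen U) : _root_.IsOpenCover D :=
  ⟨hD, eq_univ_of_univ_subset (hC.2 ▸ sUnion_subset_sUnion hCD)⟩

theorem PointFinite.exists_frequently_eq {C : Set (Set X)} (hC : PointFinite C) {x : X}
    {Y : ℕ → Set X} (hY : ∀ n, Y n ∈ C ∧ x ∈ Y n) : ∃ U ∈ C, ∃ᶠ n in Filter.atTop, Y n = U := by
  have := (hC x).to_subtype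
  obtain ⟨⟨U, hU, _⟩, hfiber⟩ :=
    Finite.exists_infinite_fiber fun n => (⟨Y n, hY n⟩ : {U ∈ C | x ∈ U})
  refine ⟨U, hU, Nat.frequently_atTop_iff_infinite.2 ?_⟩
  convert infinite_coe_iff.1 hfiber using 1
  ext n
  simp [Subtype.ext_iff]

end Covers

section OrderTopology

variable {X : Type*} [LinearOrder X] [TopologicalSpace X] [OrderTopology X]

theorem exists_lt_self_Ioc_subset_of_isOpen {W : X → Set X} (hW : ∀ γ, IsOpen (W γ))
    (hγW : ∀ γ, γ ∈ W γ) :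
    ∃ g : X → X, ∀ γ, ¬IsMin γ → g γ < γ ∧ Ioc (g γ) γ ⊆ W γ := by
  have hg : ∀ γ, ∃ b, ¬IsMin γ → b < γ ∧ Ioc b γ ⊆ W γ := by
    intro γ
    by_cases hγ : IsMin γ
    · exact ⟨γ, absurd hγ⟩
    · obtain ⟨b, hb⟩ :=
        exists_Ioc_subset_of_mem_nhds ((hW γ).mem_nhds (hγW γ)) (not_isMin_iff.1 hγ)
      exact ⟨b, fun _ => hb⟩
  choose g hg using hg
  exact ⟨g, hg⟩

end OrderTopology

section SuccOrder

open Order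

variable {X : Type*} [LinearOrder X] [SuccOrder X] [NoMaxOrder X]

theorem PointFinite.not_forall_Ioc_subset {β δ : X} {γs : ℕ → X} (hγs : Monotone γs)
    (hβ : ∀ n, β < γs n) (hδ : IsLUB (range γs) δ) {C : Set (Set X)} (hC : PointFinite C)
    (hCE : Refines C (Iic '' Iio δ ∪ Ioi '' Ioo β δ)) {Y : ℕ → Set X} (hY : ∀ n, Y n ∈ C) :
    ¬∀ n, Ioc β (γs n) ⊆ Y n := by
  intro hYsub
  have hsucc_mem : ∀ n, succ β ∈ Y n := fun n => hYsub n ⟨lt_succ β, succ_le_of_lt (hβ n)⟩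
  obtain ⟨U, hU, hfreq⟩ := hC.exists_frequently_eq fun n => ⟨hY n, hsucc_mem n⟩
  obtain ⟨V, hV, hUV⟩ := hCE U hU
  rcases hV with ⟨α, hαδ, rfl⟩ | ⟨α, hα, rfl⟩
  · refine hαδ.not_ge (hδ.2 (forall_mem_range.2 fun n => ?_))
    obtain ⟨k, hnk, rfl⟩ := Filter.frequently_atTop.1 hfreq n
    exact (hγs hnk).trans (hUV (hYsub k ⟨hβ k, le_rfl⟩))
  · obtain ⟨k, -, rfl⟩ := Filter.frequently_atTop.1 hfreq 0
    exact hα.1.not_ge (lt_succ_iff.1 (hUV (hsucc_mem k)))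

variable [TopologicalSpace X] [OrderTopology X]

theorem isOpen_Iic_of_succOrder (a : X) : IsOpen (Iic a) :=
  Iio_succ a ▸ isOpen_Iio

theorem isOpenCover_Iic_Ioi (a : X) : _root_.IsOpenCover {Iic a, Ioi a} := by
  refine ⟨?_, by simp [Iic_union_Ioi]⟩
  rintro U (rfl | rfl)
  exacts [isOpen_Iic_of_succOrder a, isOpen_Ioi]

theorem not_monotonicallyCountablyMetacompact_of_countable_Iio [WellFoundedLT X]
    (hIio : ∀ x : X, (Iio x).Countable) (hbdd : ∀ S : Set X, S.Countable → BddAbove S) :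
    ¬MonotonicallyCountablyMetacompact X := by
  rintro ⟨r, hr, hmono⟩
  have hK : ∀ γ : X,
      _root_.IsOpenCover {Iic γ, Ioi γ} ∧ ({Iic γ, Ioi γ} : Set (Set X)).Countable :=
    fun γ => ⟨isOpenCover_Iic_Ioi γ, (countable_singleton _).insert _⟩
  have hrK := fun γ => hr _ (hK γ).1 (hK γ).2
  have hW : ∀ γ, ∃ W ∈ r {Iic γ, Ioi γ}, γ ∈ W := fun γ => sUnion_eq_univ_iff.1 (hrK γ).1.2 γ
  choose W hW_mem hγW using hW
  obtain ⟨g, hg⟩ := exists_lt_self_Ioc_subset_of_isOpen (fun γ => (hrK γ).1.1 _ (hW_mem γ)) hγW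
  obtain ⟨β, hβ⟩ := exists_not_bddAbove_preimage_of_lt_self hIio hbdd fun γ hγ => (hg γ hγ).1
  obtain ⟨γs, hγs_mono, hγs⟩ := exists_strictMono_gt_mem_of_not_bddAbove hβ β
  obtain ⟨δ, hδ⟩ := (hbdd _ (countable_range γs)).exists_isLUB_of_wellFoundedLT
  have hγs_lt : ∀ n, γs n < δ := fun n =>
    (hγs_mono n.lt_succ_self).trans_le (hδ.1 (mem_range_self _))
  set E : Set (Set X) := Iic '' Iio δ ∪ Ioi '' Ioo β δ
  have hKE : ∀ n, {Iic (γs n), Ioi (γs n)} ⊆ E := by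
    rintro n U (rfl | rfl)
    exacts [Or.inl ⟨γs n, hγs_lt n, rfl⟩, Or.inr ⟨γs n, ⟨(hγs n).1, hγs_lt n⟩, rfl⟩]
  have hE : _root_.IsOpenCover E := (hK (γs 0)).1.mono (hKE 0) <| by
    rintro U (⟨α, -, rfl⟩ | ⟨α, -, rfl⟩)
    exacts [isOpen_Iic_of_succOrder α, isOpen_Ioi]
  have hE_countable : E.Countable :=
    ((hIio δ).image _).union (((hIio δ).mono Ioo_subset_Iio_self).image _)
  have hY : ∀ n, ∃ Y ∈ r E, W (γs n) ⊆ Y := fun n =>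
    hmono _ _ (hK _).1 hE (hK _).2 hE_countable (.of_subset (hKE n)) _ (hW_mem _)
  choose Y hY_mem hWY using hY
  have hrE := hr E hE hE_countable
  refine hrE.2.1.not_forall_Ioc_subset hγs_mono.monotone (fun n => (hγs n).1) hδ hrE.2.2 hY_mem
    fun n => ?_
  have hgγ := hg (γs n) (not_isMin_iff.2 ⟨β, (hγs n).1⟩)
  rw [(hγs n).2] at hgγ
  exact hgγ.2.trans (hWY n)

end SuccOrder

section OmegaOne

open Cardinal

theorem Ordinal.countable_Iio_of_lt_omega_one {o : Ordinal} (ho : o < Ordinal.omega 1) :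
    (Iio o).Countable := by
  rwa [← le_aleph0_iff_set_countable, Cardinal.mk_Iio_ordinal, lift_le_aleph0, ← lt_aleph_one_iff,
    ← lt_ord, ord_aleph]

variable {X : Type*} [LinearOrder X]

theorem countable_Iio_of_orderIso_omega_one (e : X ≃o Iio (aleph 1).ord) (x : X) :
    (Iio x).Countable := by
  have hx : (Iio (e x : Ordinal)).Countable :=
    Ordinal.countable_Iio_of_lt_omega_one ((e x).2.trans_eq (ord_aleph 1))
  convert (hx.preimage Subtype.val_injective).preimage e.injective using 1
  ext y
  simp

theorem bddAbove_of_orderIso_omega_one (e : X ≃o Iio (aleph 1).ord) {S : Set X}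
    (hS : S.Countable) : BddAbove S := by
  have := hS.to_subtype
  have hsup : ⨆ x : S, (e x : Ordinal) < (aleph 1).ord :=
    (Ordinal.iSup_lt_omega_one fun x : S => (e x).2.trans_eq (ord_aleph 1)).trans_eq
      (ord_aleph 1).symm
  refine ⟨e.symm ⟨_, hsup⟩, fun x hx => e.le_symm_apply.2 ?_⟩
  exact le_ciSup (f := fun x : S => (e x : Ordinal))
    ⟨_, forall_mem_range.2 fun x => (e x).2.le⟩ ⟨x, hx⟩

theorem noMaxOrder_of_orderIso_omega_one (e : X ≃o Iio (aleph 1).ord) : NoMaxOrder X := by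
  refine ⟨fun x => ⟨e.symm ⟨Order.succ (e x), ?_⟩, ?_⟩⟩
  · exact (isSuccLimit_ord (aleph0_le_aleph 1)).succ_lt (e x).2
  · rw [e.lt_symm_apply, ← Subtype.coe_lt_coe]
    exact Order.lt_succ (e x : Ordinal)

end OmegaOne

theorem stmt9 {X : Type*} [LinearOrder X] [TopologicalSpace X] [OrderTopology X]
    (e : X ≃o Set.Iio (Cardinal.aleph 1).ord) :
    ¬ MonotonicallyCountablyMetacompact X := by
  have := e.toOrderEmbedding.wellFoundedLT
  have := noMaxOrder_of_orderIso_omega_one e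
  let := SuccOrder.ofLinearWellFoundedLT X
  exact not_monotonicallyCountablyMetacompact_of_countable_Iio
    (countable_Iio_of_orderIso_omega_one e) fun _ => bddAbove_of_orderIso_omega_one e
end

section
/- Monotone (countable) metacompactness is inherited by closed subspaces: if X is monotonically (countably) metacompact and Y ⊆ X is closed, then the subspace Y is monotonically (countably) metacompact. -/
open Set TopologicalSpace

/-!
Extend each open set `A` of `Y` to `interior (A ∪ Yᶜ)`, the largest open set of `X` whose trace
on `Y` lies in `A`. Being the largest, it is monotone in `A`, so together with the open set `X \ Y`
it turns open covers of `Y` into open covers of `X`, monotonically and preserving countability.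
Apply the operator of `X` and take the nonempty traces on `Y`: traces of a point-finite open
refinement form a point-finite open refinement, and refinement passes to traces.
-/

section Trace

variable {X : Type*} {Y : Set X}

/-- Empty traces are discarded: when `Y` is empty they would not refine the empty cover. -/
def traceCover (Y : Set X) (𝒲 : Set (Set X)) : Set (Set Y) :=
  (Subtype.val ⁻¹' ·) '' 𝒲 \ {∅}

lemma pointFinite_traceCover {𝒲 : Set (Set X)} (h𝒲 : PointFinite 𝒲) :
    PointFinite (traceCover Y 𝒲) := by
  intro y
  refine ((h𝒲 y).image (Subtype.val ⁻¹' ·)).subset ?_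
  rintro A ⟨⟨⟨W, hW, rfl⟩, -⟩, hyA⟩
  exact ⟨W, ⟨hW, hyA⟩, rfl⟩

lemma refines_traceCover {𝒲 𝒲' : Set (Set X)} (h : Refines 𝒲 𝒲') :
    Refines (traceCover Y 𝒲) (traceCover Y 𝒲') := by
  rintro A ⟨⟨W, hW, rfl⟩, hne⟩
  obtain ⟨W', hW', hWW'⟩ := h W hW
  have hsub : (Subtype.val ⁻¹' W : Set Y) ⊆ Subtype.val ⁻¹' W' := preimage_mono hWW'
  exact ⟨_, ⟨⟨W', hW', rfl⟩, fun h => hne (subset_empty_iff.mp (h ▸ hsub))⟩, hsub⟩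

end Trace

section ClosedSubspace

variable {X : Type*} [TopologicalSpace X] {Y : Set X}

def extendOpen (Y : Set X) (A : Set Y) : Set X :=
  interior (Subtype.val '' A ∪ Yᶜ)

lemma preimage_val_extendOpen_subset (A : Set Y) : Subtype.val ⁻¹' extendOpen Y A ⊆ A := by
  intro y hy
  rcases interior_subset hy with ⟨z, hz, hzy⟩ | hy'
  · exact Subtype.val_injective hzy ▸ hz
  · exact absurd y.2 hy'

lemma subset_preimage_val_extendOpen {A : Set Y} (hA : IsOpen A) :
    A ⊆ Subtype.val ⁻¹' extendOpen Y A := by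
  obtain ⟨W, hW, rfl⟩ := isOpen_induced_iff.mp hA
  have hWsub : W ⊆ Subtype.val '' (Subtype.val ⁻¹' W : Set Y) ∪ Yᶜ := by
    intro x hx
    by_cases hxY : x ∈ Y
    · exact Or.inl ⟨⟨x, hxY⟩, hx, rfl⟩
    · exact Or.inr hxY
  exact preimage_mono (interior_maximal hWsub hW)

lemma extendOpen_mono {A B : Set Y} (h : A ⊆ B) : extendOpen Y A ⊆ extendOpen Y B :=
  interior_mono (union_subset_union_left _ (image_mono h))

def extendCover (Y : Set X) (𝒰 : Set (Set Y)) : Set (Set X) :=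
  insert Yᶜ (extendOpen Y '' 𝒰)

lemma isOpenCover_extendCover (hY : IsClosed Y) {𝒰 : Set (Set Y)}
    (h𝒰 : _root_.IsOpenCover 𝒰) :
    _root_.IsOpenCover (extendCover Y 𝒰) := by
  refine ⟨?_, eq_univ_of_forall fun x => ?_⟩
  · rintro W (rfl | ⟨A, -, rfl⟩)
    exacts [hY.isOpen_compl, isOpen_interior]
  · by_cases hx : x ∈ Y
    · obtain ⟨A, hA, hxA⟩ := h𝒰.2 ▸ mem_univ (⟨x, hx⟩ : Y)
      exact ⟨extendOpen Y A, Or.inr ⟨A, hA, rfl⟩,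
        subset_preimage_val_extendOpen (h𝒰.1 A hA) hxA⟩
    · exact ⟨Yᶜ, Or.inl rfl, hx⟩

lemma countable_extendCover {𝒰 : Set (Set Y)} (h𝒰 : 𝒰.Countable) :
    (extendCover Y 𝒰).Countable :=
  (h𝒰.image _).insert _

lemma refines_extendCover {𝒰 𝒱 : Set (Set Y)} (h : Refines 𝒰 𝒱) :
    Refines (extendCover Y 𝒰) (extendCover Y 𝒱) := by
  rintro W (rfl | ⟨A, hA, rfl⟩)
  · exact ⟨Yᶜ, Or.inl rfl, subset_rfl⟩
  · obtain ⟨B, hB, hAB⟩ := h A hA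
    exact ⟨extendOpen Y B, Or.inr ⟨B, hB, rfl⟩, extendOpen_mono hAB⟩

lemma isOpenCover_traceCover {𝒲 : Set (Set X)} (h𝒲 : _root_.IsOpenCover 𝒲) :
    _root_.IsOpenCover (traceCover Y 𝒲) := by
  refine ⟨?_, eq_univ_of_forall fun y => ?_⟩
  · rintro A ⟨⟨W, hW, rfl⟩, -⟩
    exact (h𝒲.1 W hW).preimage continuous_subtype_val
  · obtain ⟨W, hW, hyW⟩ := h𝒲.2 ▸ mem_univ (y : X)
    exact ⟨_, ⟨⟨W, hW, rfl⟩, Set.nonempty_iff_ne_empty.mp ⟨y, hyW⟩⟩, hyW⟩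

lemma refines_traceCover_of_refines_extendCover {𝒲 : Set (Set X)} {𝒰 : Set (Set Y)}
    (h : Refines 𝒲 (extendCover Y 𝒰)) : Refines (traceCover Y 𝒲) 𝒰 := by
  rintro A ⟨⟨W, hW, rfl⟩, hne⟩
  obtain ⟨Z, hZ | ⟨B, hB, rfl⟩, hWZ⟩ := h W hW
  · subst hZ
    refine absurd (eq_empty_of_forall_notMem fun y hy => ?_) hne
    exact hWZ hy y.2
  · exact ⟨B, hB, (preimage_mono hWZ).trans (preimage_val_extendOpen_subset B)⟩

end ClosedSubspace

theorem stmt16 {X : Type*} [TopologicalSpace X] (Y : Set X) (hY : IsClosed Y) :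
    (MonotonicallyMetacompact X → MonotonicallyMetacompact ↥Y) ∧
    (MonotonicallyCountablyMetacompact X → MonotonicallyCountablyMetacompact ↥Y) := by
  constructor
  · rintro ⟨r, hr, hmono⟩
    refine ⟨fun 𝒰 => traceCover Y (r (extendCover Y 𝒰)), fun 𝒰 h𝒰 => ?_,
      fun 𝒰 𝒱 h𝒰 h𝒱 h => ?_⟩
    · obtain ⟨hcov, hpf, href⟩ := hr _ (isOpenCover_extendCover hY h𝒰)
      exact ⟨isOpenCover_traceCover hcov, pointFinite_traceCover hpf,
        refines_traceCover_of_refines_extendCover href⟩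
    · exact refines_traceCover (hmono _ _ (isOpenCover_extendCover hY h𝒰)
        (isOpenCover_extendCover hY h𝒱) (refines_extendCover h))
  · rintro ⟨r, hr, hmono⟩
    refine ⟨fun 𝒰 => traceCover Y (r (extendCover Y 𝒰)), fun 𝒰 h𝒰 hc => ?_,
      fun 𝒰 𝒱 h𝒰 h𝒱 hc𝒰 hc𝒱 h => ?_⟩
    · obtain ⟨hcov, hpf, href⟩ :=
        hr _ (isOpenCover_extendCover hY h𝒰) (countable_extendCover hc)
      exact ⟨isOpenCover_traceCover hcov, pointFinite_traceCover hpf,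
        refines_traceCover_of_refines_extendCover href⟩
    · exact refines_traceCover (hmono _ _ (isOpenCover_extendCover hY h𝒰)
        (isOpenCover_extendCover hY h𝒱) (countable_extendCover hc𝒰)
        (countable_extendCover hc𝒱) (refines_extendCover h))
end
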